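/- Let β₁ < 0 and β₂ > 20β₁. Then for every ξ ∈ ℂ⁵ with Σ_{ℓ=−2}^{2}|ξ_ℓ|² = 1, one has β₁(|τ(ξ)|² + F_z(ξ)²) + (β₂/5)|δ(ξ)|² ≥ 4β₁, and equality is attained at ξ = (1,0,0,0,0); i.e., the minimum of β₁(|τ|² + F_z²) + (β₂/5)|δ|² over the complex unit sphere of ℂ⁵ equals 4β₁. -/

import Mathlib

/-
With A = ξ₂ξ̄₋₁ + ξ₁ξ̄₋₂, B = ξ₂ξ̄₀ − ξ₀ξ̄₋₂, C = ξ₂ξ̄₁ + ξ₋₁ξ̄₋₂, D = ξ₁ξ̄₀ + ξ₀ξ̄₋₁,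
F = ξ₀ξ̄₁ + ξ₋₁ξ̄₀ and E = |ξ₋₁|² − |ξ₁|², expanding gives
  |τ|² + F_z² + 4|δ|² + 12|A|² + 2|F|² + 8|B|² + 3E² = 4‖ξ‖⁴ + 4√6 Re(D C̄).
The relation C D = A F − B E gives Re(D C̄) ≤ |A||F| + |B||E|, and AM-GM (with
12·2 = 8·3 = (2√6)²) absorbs 4√6 times this into 12|A|² + 2|F|² + 8|B|² + 3E².
Hence |τ|² + F_z² + 4|δ|² ≤ 4 on the unit sphere, so for β₁ < 0 the energy is at least
4β₁ + (β₂/5 − 4β₁)|δ|² ≥ 4β₁.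
-/
noncomputable section

/-- τ for complex 5-vectors (ξ₂, ξ₁, ξ₀, ξ₋₁, ξ₋₂). -/
def tauC (z2 z1 z0 zm1 zm2 : ℂ) : ℂ :=
  2 * ((starRingEnd ℂ) z2 * z1 + (starRingEnd ℂ) zm1 * zm2)
    + (Real.sqrt 6 : ℂ) * ((starRingEnd ℂ) z1 * z0 + (starRingEnd ℂ) z0 * zm1)

/-- δ for complex 5-vectors. -/
def deltaC (z2 z1 z0 zm1 zm2 : ℂ) : ℂ :=
  2 * z2 * zm2 - 2 * z1 * zm1 + z0 ^ 2

/-- F_z for complex 5-vectors. -/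
def FzC (z2 z1 z0 zm1 zm2 : ℂ) : ℝ :=
  2 * (‖z2‖ ^ 2 - ‖zm2‖ ^ 2)
    + ‖z1‖ ^ 2 - ‖zm1‖ ^ 2

/-- Membership in S_C(M): mass and magnetization constraints. -/
def memSC (M : ℝ) (z2 z1 z0 zm1 zm2 : ℂ) : Prop :=
  ‖z2‖ ^ 2 + ‖z1‖ ^ 2 + ‖z0‖ ^ 2
      + ‖zm1‖ ^ 2 + ‖zm2‖ ^ 2 = 1 ∧
  2 * ‖z2‖ ^ 2 + ‖z1‖ ^ 2
      - ‖zm1‖ ^ 2 - 2 * ‖zm2‖ ^ 2 = M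

/-- The uniform energy E_U. -/
def EU (b0 b1 b2 M : ℝ) (z2 z1 z0 zm1 zm2 : ℂ) : ℝ :=
  (1 / 2) * (b1 * ‖tauC z2 z1 z0 zm1 zm2‖ ^ 2
    + (b2 / 5) * ‖deltaC z2 z1 z0 zm1 zm2‖ ^ 2
    + b0 + b1 * M ^ 2)

open ComplexConjugate

lemma two_mul_mul_le_of_mul_eq_sq {p q c : ℝ} (hp : 0 < p) (hpq : p * q = c ^ 2) (a b : ℝ) :
    2 * c * (a * b) ≤ p * a ^ 2 + q * b ^ 2 := by
  have : 0 ≤ p * (p * a ^ 2 + q * b ^ 2 - 2 * c * (a * b)) := by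
    linear_combination sq_nonneg (p * a - c * b) - b ^ 2 * hpq
  linarith [(mul_nonneg_iff_of_pos_left hp).1 this]

lemma four_sqrt_six_mul_re_le {A B C D F : ℂ} {E : ℝ} (h : C * D = A * F - B * E) :
    4 * √6 * (D * conj C).re
      ≤ 12 * Complex.normSq A + 2 * Complex.normSq F + 8 * Complex.normSq B + 3 * E ^ 2 := by
  have hc : (2 * √6) ^ 2 = 24 := by
    rw [mul_pow, Real.sq_sqrt (by norm_num)]; norm_num
  have hDC : (D * conj C).re ≤ ‖A‖ * ‖F‖ + ‖B‖ * |E| :=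
    calc (D * conj C).re ≤ ‖D * conj C‖ := Complex.re_le_norm _
      _ = ‖A * F - B * E‖ := by rw [← h, norm_mul, norm_mul, Complex.norm_conj, mul_comm]
      _ ≤ ‖A * F‖ + ‖B * E‖ := norm_sub_le _ _
      _ = ‖A‖ * ‖F‖ + ‖B‖ * |E| := by simp only [norm_mul, Complex.norm_real, Real.norm_eq_abs]
  have hAF := two_mul_mul_le_of_mul_eq_sq (p := 12) (q := 2) (by norm_num)
    (by rw [hc]; norm_num) ‖A‖ ‖F‖
  have hBE := two_mul_mul_le_of_mul_eq_sq (p := 8) (q := 3) (by norm_num)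
    (by rw [hc]; norm_num) ‖B‖ |E|
  rw [← Complex.sq_norm, ← Complex.sq_norm, ← Complex.sq_norm, ← sq_abs E]
  linarith [mul_le_mul_of_nonneg_left hDC (by positivity : (0 : ℝ) ≤ 4 * √6)]

lemma spin2_sum_of_squares_identity (z2 z1 z0 zm1 zm2 : ℂ) :
    Complex.normSq (tauC z2 z1 z0 zm1 zm2) + FzC z2 z1 z0 zm1 zm2 ^ 2
      + 4 * Complex.normSq (deltaC z2 z1 z0 zm1 zm2)
      + 12 * Complex.normSq (z2 * conj zm1 + z1 * conj zm2)
      + 2 * Complex.normSq (z0 * conj z1 + zm1 * conj z0)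
      + 8 * Complex.normSq (z2 * conj z0 - z0 * conj zm2)
      + 3 * (Complex.normSq zm1 - Complex.normSq z1) ^ 2
    = 4 * (Complex.normSq z2 + Complex.normSq z1 + Complex.normSq z0
        + Complex.normSq zm1 + Complex.normSq zm2) ^ 2
      + 4 * √6 * ((z1 * conj z0 + z0 * conj zm1) * conj (z2 * conj z1 + zm1 * conj zm2)).re := by
  have hs6 : √6 ^ 2 = 6 := Real.sq_sqrt (by norm_num)
  linear_combination (norm := skip) Complex.normSq (z1 * conj z0 + z0 * conj zm1) * hs6
  simp only [FzC, Complex.sq_norm]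
  simp only [tauC, deltaC, Complex.normSq_apply, Complex.add_re,
    Complex.add_im, Complex.sub_re, Complex.sub_im, Complex.mul_re, Complex.mul_im,
    Complex.ofReal_re, Complex.ofReal_im, Complex.conj_re, Complex.conj_im,
    Complex.re_ofNat, Complex.im_ofNat, pow_two]
  ring

lemma spin2_bilinear_relation (z2 z1 z0 zm1 zm2 : ℂ) :
    (z2 * conj z1 + zm1 * conj zm2) * (z1 * conj z0 + z0 * conj zm1)
      = (z2 * conj zm1 + z1 * conj zm2) * (z0 * conj z1 + zm1 * conj z0)
        - (z2 * conj z0 - z0 * conj zm2) * ((Complex.normSq zm1 - Complex.normSq z1 : ℝ) : ℂ) := by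
  rw [Complex.ofReal_sub, ← Complex.mul_conj, ← Complex.mul_conj]
  ring

lemma norm_tauC_sq_add_FzC_sq_add_four_mul_norm_deltaC_sq_le (z2 z1 z0 zm1 zm2 : ℂ) :
    ‖tauC z2 z1 z0 zm1 zm2‖ ^ 2 + FzC z2 z1 z0 zm1 zm2 ^ 2
        + 4 * ‖deltaC z2 z1 z0 zm1 zm2‖ ^ 2
      ≤ 4 * (‖z2‖ ^ 2 + ‖z1‖ ^ 2 + ‖z0‖ ^ 2 + ‖zm1‖ ^ 2 + ‖zm2‖ ^ 2) ^ 2 := by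
  have hcross := four_sqrt_six_mul_re_le (spin2_bilinear_relation z2 z1 z0 zm1 zm2)
  have hid := spin2_sum_of_squares_identity z2 z1 z0 zm1 zm2
  simp only [Complex.sq_norm]
  linarith [Complex.normSq_nonneg (z2 * conj zm1 + z1 * conj zm2),
    Complex.normSq_nonneg (z0 * conj z1 + zm1 * conj z0),
    Complex.normSq_nonneg (z2 * conj z0 - z0 * conj zm2)]

theorem stmt19 (b1 b2 : ℝ) (hb1 : b1 < 0) (hb2 : b2 > 20 * b1) :
    (∀ z2 z1 z0 zm1 zm2 : ℂ,
      ‖z2‖ ^ 2 + ‖z1‖ ^ 2 + ‖z0‖ ^ 2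
        + ‖zm1‖ ^ 2 + ‖zm2‖ ^ 2 = 1 →
      4 * b1 ≤ b1 * (‖tauC z2 z1 z0 zm1 zm2‖ ^ 2
          + FzC z2 z1 z0 zm1 zm2 ^ 2)
        + (b2 / 5) * ‖deltaC z2 z1 z0 zm1 zm2‖ ^ 2) ∧
    b1 * (‖tauC 1 0 0 0 0‖ ^ 2 + FzC 1 0 0 0 0 ^ 2)
      + (b2 / 5) * ‖deltaC 1 0 0 0 0‖ ^ 2 = 4 * b1 := by
  refine ⟨fun z2 z1 z0 zm1 zm2 hmass => ?_, by norm_num [tauC, deltaC, FzC, mul_comm]⟩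
  have hbound := norm_tauC_sq_add_FzC_sq_add_four_mul_norm_deltaC_sq_le z2 z1 z0 zm1 zm2
  rw [hmass] at hbound
  linarith [mul_le_mul_of_nonpos_left hbound hb1.le,
    mul_nonneg (sub_nonneg.2 hb2.le) (sq_nonneg ‖deltaC z2 z1 z0 zm1 zm2‖)]
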